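/- arXiv:1811.04728 — 4 statements merged into one kernel-verified Lean document; each statement's English description precedes it below -/
import Mathlib

section
/- If A is a square matrix in block form [[A1, A2],[A3, A4]] with A1 invertible, then rank(A) = rank(A1) + rank(A4 - A3 A1^{-1} A2). -/
open Matrix

/-- The submodule product `p.prod q` is linearly equivalent to `p × q`. -/
def submoduleProdEquiv {R M N : Type*} [Semiring R] [AddCommMonoid M] [AddCommMonoid N]
    [Module R M] [Module R N] (p : Submodule R M) (q : Submodule R N) :
    (p.prod q) ≃ₗ[R] p × q where
  toFun x := (⟨x.val.1, x.property.1⟩, ⟨x.val.2, x.property.2⟩)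
  invFun y := ⟨(y.1.val, y.2.val), ⟨y.1.property, y.2.property⟩⟩
  map_add' _ _ := rfl
  map_smul' _ _ := rfl
  left_inv _ := rfl
  right_inv _ := rfl

lemma range_prodMap' {R M N M' N' : Type*} [CommRing R] [AddCommGroup M] [AddCommGroup N]
    [AddCommGroup M'] [AddCommGroup N'] [Module R M] [Module R N] [Module R M'] [Module R N']
    (f : M →ₗ[R] M') (g : N →ₗ[R] N') :
    LinearMap.range (f.prodMap g) = (LinearMap.range f).prod (LinearMap.range g) := by
  ext x
  constructor
  · rintro ⟨⟨a, b⟩, rfl⟩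
    exact ⟨⟨a, rfl⟩, ⟨b, rfl⟩⟩
  · rintro ⟨⟨a, ha⟩, ⟨b, hb⟩⟩
    exact ⟨(a, b), Prod.ext ha hb⟩

lemma rank_fromBlocks_diag {F : Type*} [Field F] {m k : ℕ}
    (A : Matrix (Fin m) (Fin m) F) (D : Matrix (Fin k) (Fin k) F) :
    (Matrix.fromBlocks A 0 0 D).rank = A.rank + D.rank := by
  classical
  set e := LinearEquiv.sumArrowLequivProdArrow (Fin m) (Fin k) F F
  have hM : (Matrix.fromBlocks A 0 0 D).mulVecLin =
      (e.symm.toLinearMap ∘ₗ (A.mulVecLin.prodMap D.mulVecLin)) ∘ₗ e.toLinearMap := by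
    refine LinearMap.ext fun x => funext fun i => ?_
    cases i <;>
      simp [e, mulVec, dotProduct, Fintype.sum_sum_type, Matrix.fromBlocks,
        LinearEquiv.sumArrowLequivProdArrow]
  rw [Matrix.rank, hM, LinearMap.range_comp_of_range_eq_top _ e.range,
    LinearMap.range_comp, LinearEquiv.finrank_map_eq, range_prodMap',
    LinearEquiv.finrank_eq (submoduleProdEquiv _ _), Module.finrank_prod,
    Matrix.rank, Matrix.rank]

theorem guttman_rank_additivity {F : Type*} [Field F] {m k : ℕ}
    (A1 : Matrix (Fin m) (Fin m) F) (A2 : Matrix (Fin m) (Fin k) F)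
    (A3 : Matrix (Fin k) (Fin m) F) (A4 : Matrix (Fin k) (Fin k) F)
    (h1 : IsUnit A1) :
    (Matrix.fromBlocks A1 A2 A3 A4).rank = A1.rank + (A4 - A3 * A1⁻¹ * A2).rank := by
  classical
  haveI := h1.invertible
  have hinv : ⅟A1 = A1⁻¹ := invOf_eq_nonsing_inv A1
  rw [Matrix.fromBlocks_eq_of_invertible₁₁ A1 A2 A3 A4]
  have hL : IsUnit (Matrix.fromBlocks (1 : Matrix (Fin m) (Fin m) F) 0 (A3 * ⅟A1) 1).det := by
    rw [Matrix.det_fromBlocks_zero₁₂]; simp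
  have hR : IsUnit (Matrix.fromBlocks (1 : Matrix (Fin m) (Fin m) F) (⅟A1 * A2) 0 1).det := by
    rw [Matrix.det_fromBlocks_zero₂₁]; simp
  rw [Matrix.mul_assoc, Matrix.rank_mul_eq_right_of_isUnit_det _ _ hL,
    Matrix.rank_mul_eq_left_of_isUnit_det _ _ hR, rank_fromBlocks_diag, hinv]
end

section
/- Let a, b, c ∈ {-1, 1} in a field F and let A be the 4×4 matrix [[0, -c, -1, 0], [c, 0, 0, -1], [1, 0, 0, b], [0, 1, a, 0]]. If the rank of A is even, then a = -b (equivalently, A is skew-symmetric). -/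
/-!
Writing `A = [[P, -1], [1, Q]]` in `2 × 2` blocks, block elimination against the identity block
gives `A = U * diag(1 + Q P, 1) * V` with `U`, `V` unimodular, and `1 + Q P = diag(1 + b c, 1 - a c)`.
Hence `rank A = 2 + #{nonzero entries among 1 + b c, 1 - a c}`. If `a ≠ -b`, then `a = b` and
`2 ≠ 0`, and since `(a c)² = 1` exactly one of `1 ± a c` vanishes, so `rank A = 3` is odd.
-/

open Matrix

lemma matrix_eq_mul_diagonal_mul {R : Type*} [CommRing R] (a b c : R) :
    !![0, -c, -1, 0; c, 0, 0, -1; 1, 0, 0, b; 0, 1, a, 0] =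
      !![0, 0, -1, 0; 0, 0, 0, -1; 1, 0, 0, b; 0, 1, a, 0] *
        diagonal ![1 + b * c, 1 - a * c, 1, 1] *
        !![1, 0, 0, 0; 0, 1, 0, 0; 0, c, 1, 0; -c, 0, 0, 1] := by
  ext i j
  fin_cases i <;> fin_cases j <;> simp [mul_apply, Fin.sum_univ_four, vecMul_diagonal]

lemma card_ne_zero_vec_one_one {F : Type*} [Field F] [DecidableEq F] (x y : F) :
    Fintype.card {i // ![x, y, 1, 1] i ≠ 0} =
      (if x = 0 then 0 else 1) + (if y = 0 then 0 else 1) + 2 := by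
  rw [Fintype.card_subtype, Finset.card_filter, Fin.sum_univ_four]
  split_ifs <;> simp_all

open Classical in
lemma rank_eq_ite_add_ite_add_two {F : Type*} [Field F] (a b c : F) :
    rank !![0, -c, -1, 0; c, 0, 0, -1; 1, 0, 0, b; 0, 1, a, 0] =
      (if 1 + b * c = 0 then 0 else 1) + (if 1 - a * c = 0 then 0 else 1) + 2 := by
  have hU : IsUnit (!![0, 0, -1, 0; 0, 0, 0, -1; 1, 0, 0, b; 0, 1, a, 0] : Matrix _ _ F).det := by
    simp [det_succ_row_zero, Fin.sum_univ_succ, Fin.succAbove]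
  have hV : IsUnit (!![1, 0, 0, 0; 0, 1, 0, 0; 0, c, 1, 0; -c, 0, 0, 1] : Matrix _ _ F).det := by
    simp [det_succ_row_zero, Fin.sum_univ_succ, Fin.succAbove]
  rw [matrix_eq_mul_diagonal_mul, rank_mul_eq_left_of_isUnit_det _ _ hV,
    rank_mul_eq_right_of_isUnit_det _ _ hU, rank_diagonal, card_ne_zero_vec_one_one]

theorem lemma_n4 {F : Type*} [Field F] (a b c : F)
    (ha : a = 1 ∨ a = -1) (hb : b = 1 ∨ b = -1) (hc : c = 1 ∨ c = -1)
    (h : Even (Matrix.rank !![0, -c, -1, 0; c, 0, 0, -1; 1, 0, 0, b; 0, 1, a, 0])) :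
    a = -b := by
  by_contra hab
  have hba : b = a := by
    rcases ha with rfl | rfl <;> rcases hb with rfl | rfl <;> simp_all
  subst hba
  have h2 : (1 : F) + 1 ≠ 0 := fun h2 => hab (by linear_combination b * h2)
  have hbc : b * c = 1 ∨ b * c = -1 := by
    rcases hb with rfl | rfl <;> rcases hc with rfl | rfl <;> simp
  rw [rank_eq_ite_add_ite_add_two] at h
  rcases hbc with hbc | hbc <;> simp [hbc, h2, Nat.even_iff] at h
end

section
/- Let n ≥ 3 and let A be the n×n matrix over a field F with A[1,2] = -c, A[2,1] = c, A[i+2,i] = 1 and A[i,i+2] = -1 for 1 ≤ i ≤ n-3, A[n,n-2] = 1, A[n-2,n] = -1, A[n,n-1] = a, A[n-1,n] = b, and all other entries zero, where a, b, c ∈ {-1, 1}. If the rank of A is even, then a = -b. -/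
private def pv {F : Type*} [Field F] (c : F) (k : ℕ) : F :=
  if k % 4 = 0 then 1 else if k % 4 = 3 then c else 0

private def qv {F : Type*} [Field F] (c : F) (k : ℕ) : F :=
  if k % 4 = 1 then 1 else if k % 4 = 2 then -c else 0

private def ent {F : Type*} [Field F] (a c : F) (n i j : ℕ) : F :=
  if i = 0 ∧ j = 1 then -c
  else if i = 1 ∧ j = 0 then c
  else if i = n - 1 ∧ j = n - 2 then a
  else if i = n - 2 ∧ j = n - 1 then a
  else if j + 2 = i then 1
  else if i + 2 = j then -1
  else 0

private lemma rowEval {F : Type*} [Field F] {n : ℕ} (A : Matrix (Fin n) (Fin n) F)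
    (x : Fin n → F) (i j1 j2 : Fin n) (h12 : j1 ≠ j2)
    (h0 : ∀ j, j ≠ j1 → j ≠ j2 → A i j = 0) :
    A.mulVec x i = A i j1 * x j1 + A i j2 * x j2 := by
  have hs : ∑ j ∈ ({j1, j2} : Finset (Fin n)), A i j * x j = ∑ j, A i j * x j := by
    refine Finset.sum_subset (Finset.subset_univ _) ?_
    intro j _ hj
    simp only [Finset.mem_insert, Finset.mem_singleton, not_or] at hj
    rw [h0 j hj.1 hj.2, zero_mul]
  simp only [Matrix.mulVec, dotProduct]
  rw [← hs, Finset.sum_pair h12]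

section Rows
variable {F : Type*} [Field F] {n : ℕ} (a c : F) (A : Matrix (Fin n) (Fin n) F)

private lemma entMM (hE : ∀ i j : Fin n, A i j = ent a c n i.val j.val)
    (i j : ℕ) (hi : i < n) (hj : j < n) : A ⟨i, hi⟩ ⟨j, hj⟩ = ent a c n i j := by
  rw [hE]

private lemma entMV (hE : ∀ i j : Fin n, A i j = ent a c n i.val j.val)
    (i : ℕ) (hi : i < n) (j : Fin n) : A ⟨i, hi⟩ j = ent a c n i j.val := by
  rw [hE]

private lemma entVM (hE : ∀ i j : Fin n, A i j = ent a c n i.val j.val)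
    (i : Fin n) (j : ℕ) (hj : j < n) : A i ⟨j, hj⟩ = ent a c n i.val j := by
  rw [hE]

private lemma R0 (hn4 : 4 ≤ n) (hE : ∀ i j : Fin n, A i j = ent a c n i.val j.val)
    (x : Fin n → F) :
    A.mulVec x ⟨0, by omega⟩ = (-c) * x (⟨1, by omega⟩) + (-1) * x (⟨2, by omega⟩) := by
  have e1 : A ⟨0, by omega⟩ (⟨1, by omega⟩) = -c := by
    rw [entMM a c A hE 0 1 (by omega) (by omega)]; unfold ent
    rw [if_pos (show ((0 : ℕ) = 0 ∧ (1 : ℕ) = 1) by omega)]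
  have e2 : A ⟨0, by omega⟩ (⟨2, by omega⟩) = -1 := by
    rw [entMM a c A hE 0 2 (by omega) (by omega)]; unfold ent
    rw [if_neg (show ¬((0 : ℕ) = 0 ∧ (2 : ℕ) = 1) by omega),
      if_neg (show ¬((0 : ℕ) = 1 ∧ (2 : ℕ) = 0) by omega),
      if_neg (show ¬((0 : ℕ) = n - 1 ∧ (2 : ℕ) = n - 2) by omega),
      if_neg (show ¬((0 : ℕ) = n - 2 ∧ (2 : ℕ) = n - 1) by omega),
      if_neg (show ¬((2 : ℕ) + 2 = (0 : ℕ)) by omega),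
      if_pos (show ((0 : ℕ) + 2 = (2 : ℕ)) by omega)]
  rw [rowEval A x ⟨0, by omega⟩ (⟨1, by omega⟩) (⟨2, by omega⟩)
    (by simp only [ne_eq, Fin.ext_iff, Fin.val_mk]; omega)
    (fun j hj1 hj2 => by
      simp only [ne_eq, Fin.ext_iff, Fin.val_mk] at hj1 hj2
      rw [entMV a c A hE 0 (by omega) j]; unfold ent
      rw [if_neg (show ¬((0 : ℕ) = 0 ∧ (↑j : ℕ) = 1) by omega),
      if_neg (show ¬((0 : ℕ) = 1 ∧ (↑j : ℕ) = 0) by omega),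
      if_neg (show ¬((0 : ℕ) = n - 1 ∧ (↑j : ℕ) = n - 2) by omega),
      if_neg (show ¬((0 : ℕ) = n - 2 ∧ (↑j : ℕ) = n - 1) by omega),
      if_neg (show ¬((↑j : ℕ) + 2 = (0 : ℕ)) by omega),
      if_neg (show ¬((0 : ℕ) + 2 = (↑j : ℕ)) by omega)]), e1, e2]

private lemma R1 (hn4 : 4 ≤ n) (hE : ∀ i j : Fin n, A i j = ent a c n i.val j.val)
    (x : Fin n → F) :
    A.mulVec x ⟨1, by omega⟩ = (c) * x (⟨0, by omega⟩) + (-1) * x (⟨3, by omega⟩) := by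
  have e1 : A ⟨1, by omega⟩ (⟨0, by omega⟩) = c := by
    rw [entMM a c A hE 1 0 (by omega) (by omega)]; unfold ent
    rw [if_neg (show ¬((1 : ℕ) = 0 ∧ (0 : ℕ) = 1) by omega),
      if_pos (show ((1 : ℕ) = 1 ∧ (0 : ℕ) = 0) by omega)]
  have e2 : A ⟨1, by omega⟩ (⟨3, by omega⟩) = -1 := by
    rw [entMM a c A hE 1 3 (by omega) (by omega)]; unfold ent
    rw [if_neg (show ¬((1 : ℕ) = 0 ∧ (3 : ℕ) = 1) by omega),
      if_neg (show ¬((1 : ℕ) = 1 ∧ (3 : ℕ) = 0) by omega),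
      if_neg (show ¬((1 : ℕ) = n - 1 ∧ (3 : ℕ) = n - 2) by omega),
      if_neg (show ¬((1 : ℕ) = n - 2 ∧ (3 : ℕ) = n - 1) by omega),
      if_neg (show ¬((3 : ℕ) + 2 = (1 : ℕ)) by omega),
      if_pos (show ((1 : ℕ) + 2 = (3 : ℕ)) by omega)]
  rw [rowEval A x ⟨1, by omega⟩ (⟨0, by omega⟩) (⟨3, by omega⟩)
    (by simp only [ne_eq, Fin.ext_iff, Fin.val_mk]; omega)
    (fun j hj1 hj2 => by
      simp only [ne_eq, Fin.ext_iff, Fin.val_mk] at hj1 hj2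
      rw [entMV a c A hE 1 (by omega) j]; unfold ent
      rw [if_neg (show ¬((1 : ℕ) = 0 ∧ (↑j : ℕ) = 1) by omega),
      if_neg (show ¬((1 : ℕ) = 1 ∧ (↑j : ℕ) = 0) by omega),
      if_neg (show ¬((1 : ℕ) = n - 1 ∧ (↑j : ℕ) = n - 2) by omega),
      if_neg (show ¬((1 : ℕ) = n - 2 ∧ (↑j : ℕ) = n - 1) by omega),
      if_neg (show ¬((↑j : ℕ) + 2 = (1 : ℕ)) by omega),
      if_neg (show ¬((1 : ℕ) + 2 = (↑j : ℕ)) by omega)]), e1, e2]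

private lemma Rmid (hn4 : 4 ≤ n) (hE : ∀ i j : Fin n, A i j = ent a c n i.val j.val)
    (x : Fin n → F) (i : Fin n) (hl : 2 ≤ i.val) (hr : i.val ≤ n - 3) :
    A.mulVec x i = (1) * x (⟨i.val - 2, by omega⟩) + (-1) * x (⟨i.val + 2, by omega⟩) := by
  have e1 : A i (⟨i.val - 2, by omega⟩) = 1 := by
    rw [entVM a c A hE i (↑i - 2) (by omega)]; unfold ent
    rw [if_neg (show ¬((↑i : ℕ) = 0 ∧ (↑i - 2 : ℕ) = 1) by omega),
      if_neg (show ¬((↑i : ℕ) = 1 ∧ (↑i - 2 : ℕ) = 0) by omega),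
      if_neg (show ¬((↑i : ℕ) = n - 1 ∧ (↑i - 2 : ℕ) = n - 2) by omega),
      if_neg (show ¬((↑i : ℕ) = n - 2 ∧ (↑i - 2 : ℕ) = n - 1) by omega),
      if_pos (show ((↑i - 2 : ℕ) + 2 = (↑i : ℕ)) by omega)]
  have e2 : A i (⟨i.val + 2, by omega⟩) = -1 := by
    rw [entVM a c A hE i (↑i + 2) (by omega)]; unfold ent
    rw [if_neg (show ¬((↑i : ℕ) = 0 ∧ (↑i + 2 : ℕ) = 1) by omega),
      if_neg (show ¬((↑i : ℕ) = 1 ∧ (↑i + 2 : ℕ) = 0) by omega),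
      if_neg (show ¬((↑i : ℕ) = n - 1 ∧ (↑i + 2 : ℕ) = n - 2) by omega),
      if_neg (show ¬((↑i : ℕ) = n - 2 ∧ (↑i + 2 : ℕ) = n - 1) by omega),
      if_neg (show ¬((↑i + 2 : ℕ) + 2 = (↑i : ℕ)) by omega),
      if_pos (show ((↑i : ℕ) + 2 = (↑i + 2 : ℕ)) by omega)]
  rw [rowEval A x i (⟨i.val - 2, by omega⟩) (⟨i.val + 2, by omega⟩)
    (by simp only [ne_eq, Fin.ext_iff, Fin.val_mk]; omega)
    (fun j hj1 hj2 => by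
      simp only [ne_eq, Fin.ext_iff, Fin.val_mk] at hj1 hj2
      rw [hE i j]; unfold ent
      rw [if_neg (show ¬((↑i : ℕ) = 0 ∧ (↑j : ℕ) = 1) by omega),
      if_neg (show ¬((↑i : ℕ) = 1 ∧ (↑j : ℕ) = 0) by omega),
      if_neg (show ¬((↑i : ℕ) = n - 1 ∧ (↑j : ℕ) = n - 2) by omega),
      if_neg (show ¬((↑i : ℕ) = n - 2 ∧ (↑j : ℕ) = n - 1) by omega),
      if_neg (show ¬((↑j : ℕ) + 2 = (↑i : ℕ)) by omega),
      if_neg (show ¬((↑i : ℕ) + 2 = (↑j : ℕ)) by omega)]), e1, e2]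

private lemma Rn2 (hn4 : 4 ≤ n) (hE : ∀ i j : Fin n, A i j = ent a c n i.val j.val)
    (x : Fin n → F) :
    A.mulVec x ⟨n - 2, by omega⟩ = (1) * x (⟨n - 4, by omega⟩) + (a) * x (⟨n - 1, by omega⟩) := by
  have e1 : A ⟨n - 2, by omega⟩ (⟨n - 4, by omega⟩) = 1 := by
    rw [entMM a c A hE (n - 2) (n - 4) (by omega) (by omega)]; unfold ent
    rw [if_neg (show ¬(n - 2 = 0 ∧ n - 4 = 1) by omega),
      if_neg (show ¬(n - 2 = 1 ∧ n - 4 = 0) by omega),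
      if_neg (show ¬(n - 2 = n - 1 ∧ n - 4 = n - 2) by omega),
      if_neg (show ¬(n - 2 = n - 2 ∧ n - 4 = n - 1) by omega),
      if_pos (show (n - 4 + 2 = n - 2) by omega)]
  have e2 : A ⟨n - 2, by omega⟩ (⟨n - 1, by omega⟩) = a := by
    rw [entMM a c A hE (n - 2) (n - 1) (by omega) (by omega)]; unfold ent
    rw [if_neg (show ¬(n - 2 = 0 ∧ n - 1 = 1) by omega),
      if_neg (show ¬(n - 2 = 1 ∧ n - 1 = 0) by omega),
      if_neg (show ¬(n - 2 = n - 1 ∧ n - 1 = n - 2) by omega),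
      if_pos (show (n - 2 = n - 2 ∧ n - 1 = n - 1) by omega)]
  rw [rowEval A x ⟨n - 2, by omega⟩ (⟨n - 4, by omega⟩) (⟨n - 1, by omega⟩)
    (by simp only [ne_eq, Fin.ext_iff, Fin.val_mk]; omega)
    (fun j hj1 hj2 => by
      simp only [ne_eq, Fin.ext_iff, Fin.val_mk] at hj1 hj2
      rw [entMV a c A hE (n - 2) (by omega) j]; unfold ent
      rw [if_neg (show ¬(n - 2 = 0 ∧ (↑j : ℕ) = 1) by omega),
      if_neg (show ¬(n - 2 = 1 ∧ (↑j : ℕ) = 0) by omega),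
      if_neg (show ¬(n - 2 = n - 1 ∧ (↑j : ℕ) = n - 2) by omega),
      if_neg (show ¬(n - 2 = n - 2 ∧ (↑j : ℕ) = n - 1) by omega),
      if_neg (show ¬((↑j : ℕ) + 2 = n - 2) by omega),
      if_neg (show ¬(n - 2 + 2 = (↑j : ℕ)) by omega)]), e1, e2]

private lemma Rn1 (hn4 : 4 ≤ n) (hE : ∀ i j : Fin n, A i j = ent a c n i.val j.val)
    (x : Fin n → F) :
    A.mulVec x ⟨n - 1, by omega⟩ = (1) * x (⟨n - 3, by omega⟩) + (a) * x (⟨n - 2, by omega⟩) := by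
  have e1 : A ⟨n - 1, by omega⟩ (⟨n - 3, by omega⟩) = 1 := by
    rw [entMM a c A hE (n - 1) (n - 3) (by omega) (by omega)]; unfold ent
    rw [if_neg (show ¬(n - 1 = 0 ∧ n - 3 = 1) by omega),
      if_neg (show ¬(n - 1 = 1 ∧ n - 3 = 0) by omega),
      if_neg (show ¬(n - 1 = n - 1 ∧ n - 3 = n - 2) by omega),
      if_neg (show ¬(n - 1 = n - 2 ∧ n - 3 = n - 1) by omega),
      if_pos (show (n - 3 + 2 = n - 1) by omega)]
  have e2 : A ⟨n - 1, by omega⟩ (⟨n - 2, by omega⟩) = a := by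
    rw [entMM a c A hE (n - 1) (n - 2) (by omega) (by omega)]; unfold ent
    rw [if_neg (show ¬(n - 1 = 0 ∧ n - 2 = 1) by omega),
      if_neg (show ¬(n - 1 = 1 ∧ n - 2 = 0) by omega),
      if_pos (show (n - 1 = n - 1 ∧ n - 2 = n - 2) by omega)]
  rw [rowEval A x ⟨n - 1, by omega⟩ (⟨n - 3, by omega⟩) (⟨n - 2, by omega⟩)
    (by simp only [ne_eq, Fin.ext_iff, Fin.val_mk]; omega)
    (fun j hj1 hj2 => by
      simp only [ne_eq, Fin.ext_iff, Fin.val_mk] at hj1 hj2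
      rw [entMV a c A hE (n - 1) (by omega) j]; unfold ent
      rw [if_neg (show ¬(n - 1 = 0 ∧ (↑j : ℕ) = 1) by omega),
      if_neg (show ¬(n - 1 = 1 ∧ (↑j : ℕ) = 0) by omega),
      if_neg (show ¬(n - 1 = n - 1 ∧ (↑j : ℕ) = n - 2) by omega),
      if_neg (show ¬(n - 1 = n - 2 ∧ (↑j : ℕ) = n - 1) by omega),
      if_neg (show ¬((↑j : ℕ) + 2 = n - 1) by omega),
      if_neg (show ¬(n - 1 + 2 = (↑j : ℕ)) by omega)]), e1, e2]

end Rows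
private lemma keyLem {F : Type*} [Field F] {n : ℕ} (a c : F) (A : Matrix (Fin n) (Fin n) F)
    (hn4 : 4 ≤ n) (hE : ∀ i j : Fin n, A i j = ent a c n i.val j.val)
    (x : Fin n → F) (hx : A.mulVec x = 0) :
    ∀ k, (hk : k < n) →
      x ⟨k, hk⟩ = x ⟨0, by omega⟩ * pv c k + x ⟨1, by omega⟩ * qv c k := by
  intro k
  induction k using Nat.strong_induction_on with
  | _ k ih =>
    intro hk
    rcases Nat.lt_or_ge k 4 with h4 | h4
    · interval_cases k
      · simp [pv, qv]
      · simp [pv, qv]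
      · have e := congrFun hx ⟨0, by omega⟩
        rw [R0 a c A hn4 hE x, Pi.zero_apply] at e
        simp only [pv, qv]
        norm_num
        linear_combination -e
      · have e := congrFun hx ⟨1, by omega⟩
        rw [R1 a c A hn4 hE x, Pi.zero_apply] at e
        simp only [pv, qv]
        norm_num
        linear_combination -e
    · have e := congrFun hx ⟨k - 2, by omega⟩
      rw [Rmid a c A hn4 hE x ⟨k - 2, by omega⟩ (by simp only [Fin.val_mk]; omega)
        (by simp only [Fin.val_mk]; omega), Pi.zero_apply] at e
      simp only [Fin.val_mk, show k - 2 - 2 = k - 4 from by omega,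
        show k - 2 + 2 = k from by omega] at e
      have ihe := ih (k - 4) (by omega) (by omega)
      rw [show pv c (k - 4) = pv c k from by
          unfold pv; rw [show (k - 4) % 4 = k % 4 from by omega],
        show qv c (k - 4) = qv c k from by
          unfold qv; rw [show (k - 4) % 4 = k % 4 from by omega]] at ihe
      linear_combination ihe - e
section Cases
variable {F : Type*} [Field F] {n : ℕ}

private lemma pvEq0 (c : F) (k : ℕ) (h : k % 4 = 0) : pv c k = 1 := by simp [pv, h]
private lemma pvEq1 (c : F) (k : ℕ) (h : k % 4 = 1) : pv c k = 0 := by simp [pv, h]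
private lemma pvEq2 (c : F) (k : ℕ) (h : k % 4 = 2) : pv c k = 0 := by simp [pv, h]
private lemma pvEq3 (c : F) (k : ℕ) (h : k % 4 = 3) : pv c k = c := by simp [pv, h]
private lemma qvEq0 (c : F) (k : ℕ) (h : k % 4 = 0) : qv c k = 0 := by simp [qv, h]
private lemma qvEq1 (c : F) (k : ℕ) (h : k % 4 = 1) : qv c k = 1 := by simp [qv, h]
private lemma qvEq2 (c : F) (k : ℕ) (h : k % 4 = 2) : qv c k = -c := by simp [qv, h]
private lemma qvEq3 (c : F) (k : ℕ) (h : k % 4 = 3) : qv c k = 0 := by simp [qv, h]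

private lemma oddCase (a c : F) (A : Matrix (Fin n) (Fin n) F)
    (hn4 : 4 ≤ n) (hE : ∀ i j : Fin n, A i j = ent a c n i.val j.val)
    (h2 : (2 : F) ≠ 0) (ha0 : a ≠ 0) (hc0 : c ≠ 0)
    (hmod : n % 4 = 1 ∨ n % 4 = 3)
    (x : Fin n → F) (hx : A.mulVec x = 0) : x = 0 := by
  have k4 := keyLem a c A hn4 hE x hx
  have h2ac : (2 : F) * a * c ≠ 0 := mul_ne_zero (mul_ne_zero h2 ha0) hc0
  have e1 := congrFun hx ⟨n - 2, by omega⟩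
  rw [Rn2 a c A hn4 hE x, Pi.zero_apply] at e1
  have e2 := congrFun hx ⟨n - 1, by omega⟩
  rw [Rn1 a c A hn4 hE x, Pi.zero_apply] at e2
  rw [k4 (n - 4) (by omega), k4 (n - 1) (by omega)] at e1
  rw [k4 (n - 3) (by omega), k4 (n - 2) (by omega)] at e2
  have hst : x ⟨0, by omega⟩ = 0 ∧ x ⟨1, by omega⟩ = 0 := by
    rcases hmod with hm | hm
    · rw [pvEq1 c (n - 4) (by omega), qvEq1 c (n - 4) (by omega),
        pvEq0 c (n - 1) (by omega), qvEq0 c (n - 1) (by omega)] at e1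
      rw [pvEq2 c (n - 3) (by omega), qvEq2 c (n - 3) (by omega),
        pvEq3 c (n - 2) (by omega), qvEq3 c (n - 2) (by omega)] at e2
      have hs : x ⟨0, by omega⟩ = 0 := by
        have h'' : ((2 : F) * a * c) * x ⟨0, by omega⟩ = 0 := by
          linear_combination c * e1 + e2
        exact (mul_eq_zero.mp h'').resolve_left h2ac
      exact ⟨hs, by linear_combination e1 - a * hs⟩
    · rw [pvEq3 c (n - 4) (by omega), qvEq3 c (n - 4) (by omega),
        pvEq2 c (n - 1) (by omega), qvEq2 c (n - 1) (by omega)] at e1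
      rw [pvEq0 c (n - 3) (by omega), qvEq0 c (n - 3) (by omega),
        pvEq1 c (n - 2) (by omega), qvEq1 c (n - 2) (by omega)] at e2
      have ht : x ⟨1, by omega⟩ = 0 := by
        have h'' : ((2 : F) * a * c) * x ⟨1, by omega⟩ = 0 := by
          linear_combination c * e2 - e1
        exact (mul_eq_zero.mp h'').resolve_left h2ac
      exact ⟨by linear_combination e2 - a * ht, ht⟩
  funext j
  have hj := k4 j.val j.isLt
  simp only [Fin.eta] at hj
  rw [Pi.zero_apply, hj, hst.1, hst.2]
  ring

end Cases
section Even
variable {F : Type*} [Field F] {n : ℕ}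

private lemma evenQker (a : F) (A : Matrix (Fin n) (Fin n) F)
    (hn4 : 4 ≤ n) (hE : ∀ i j : Fin n, A i j = ent a a n i.val j.val)
    (haa : a * a = 1) (hmod : n % 4 = 0 ∨ n % 4 = 2) :
    A.mulVec (fun j : Fin n => qv a j.val) = 0 := by
  funext i
  have hi := i.isLt
  rw [Pi.zero_apply]
  have hcase : i.val = 0 ∨ i.val = 1 ∨ (2 ≤ i.val ∧ i.val ≤ n - 3) ∨ i.val = n - 2
      ∨ i.val = n - 1 := by omega
  rcases hcase with h0 | h0 | ⟨hl, hr⟩ | h0 | h0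
  · rw [show i = ⟨0, by omega⟩ from Fin.ext h0, R0 a a A hn4 hE]
    simp only [Fin.val_mk]
    rw [qvEq1 a 1 (by norm_num), qvEq2 a 2 (by norm_num)]
    ring
  · rw [show i = ⟨1, by omega⟩ from Fin.ext h0, R1 a a A hn4 hE]
    simp only [Fin.val_mk]
    rw [qvEq0 a 0 (by norm_num), qvEq3 a 3 (by norm_num)]
    ring
  · rw [Rmid a a A hn4 hE _ i hl hr]
    simp only [Fin.val_mk, qv]
    rw [show (i.val - 2) % 4 = (i.val + 2) % 4 from by omega]
    ring
  · rw [show i = ⟨n - 2, by omega⟩ from Fin.ext h0, Rn2 a a A hn4 hE]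
    simp only [Fin.val_mk]
    rcases hmod with hm | hm
    · rw [qvEq0 a (n - 4) (by omega), qvEq3 a (n - 1) (by omega)]
      ring
    · rw [qvEq2 a (n - 4) (by omega), qvEq1 a (n - 1) (by omega)]
      ring
  · rw [show i = ⟨n - 1, by omega⟩ from Fin.ext h0, Rn1 a a A hn4 hE]
    simp only [Fin.val_mk]
    rcases hmod with hm | hm
    · rw [qvEq1 a (n - 3) (by omega), qvEq2 a (n - 2) (by omega)]
      linear_combination -haa
    · rw [qvEq3 a (n - 3) (by omega), qvEq0 a (n - 2) (by omega)]
      ring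

private lemma evenQspan (a : F) (A : Matrix (Fin n) (Fin n) F)
    (hn4 : 4 ≤ n) (hE : ∀ i j : Fin n, A i j = ent a a n i.val j.val)
    (h2 : (2 : F) ≠ 0) (ha0 : a ≠ 0) (haa : a * a = 1)
    (hmod : n % 4 = 0 ∨ n % 4 = 2)
    (x : Fin n → F) (hx : A.mulVec x = 0) :
    ∃ t : F, t • (fun j : Fin n => qv a j.val) = x := by
  have k4 := keyLem a a A hn4 hE x hx
  have hs : x ⟨0, by omega⟩ = 0 := by
    rcases hmod with hm | hm
    · have e1 := congrFun hx ⟨n - 2, by omega⟩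
      rw [Rn2 a a A hn4 hE x, Pi.zero_apply] at e1
      rw [k4 (n - 4) (by omega), k4 (n - 1) (by omega)] at e1
      rw [pvEq0 a (n - 4) (by omega), qvEq0 a (n - 4) (by omega),
        pvEq3 a (n - 1) (by omega), qvEq3 a (n - 1) (by omega)] at e1
      have h'' : (2 : F) * x ⟨0, by omega⟩ = 0 := by
        linear_combination e1 - x ⟨0, by omega⟩ * haa
      exact (mul_eq_zero.mp h'').resolve_left h2
    · have e2 := congrFun hx ⟨n - 1, by omega⟩
      rw [Rn1 a a A hn4 hE x, Pi.zero_apply] at e2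
      rw [k4 (n - 3) (by omega), k4 (n - 2) (by omega)] at e2
      rw [pvEq3 a (n - 3) (by omega), qvEq3 a (n - 3) (by omega),
        pvEq0 a (n - 2) (by omega), qvEq0 a (n - 2) (by omega)] at e2
      have h'' : ((2 : F) * a) * x ⟨0, by omega⟩ = 0 := by
        linear_combination e2
      exact (mul_eq_zero.mp h'').resolve_left (mul_ne_zero h2 ha0)
  refine ⟨x ⟨1, by omega⟩, funext fun j => ?_⟩
  have hj := k4 j.val j.isLt
  simp only [Fin.eta] at hj
  rw [Pi.smul_apply, smul_eq_mul, hj, hs]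
  ring

private lemma evenPker (a : F) (A : Matrix (Fin n) (Fin n) F)
    (hn4 : 4 ≤ n) (hE : ∀ i j : Fin n, A i j = ent a (-a) n i.val j.val)
    (haa : a * a = 1) (hmod : n % 4 = 0 ∨ n % 4 = 2) :
    A.mulVec (fun j : Fin n => pv (-a) j.val) = 0 := by
  funext i
  have hi := i.isLt
  rw [Pi.zero_apply]
  have hcase : i.val = 0 ∨ i.val = 1 ∨ (2 ≤ i.val ∧ i.val ≤ n - 3) ∨ i.val = n - 2
      ∨ i.val = n - 1 := by omega
  rcases hcase with h0 | h0 | ⟨hl, hr⟩ | h0 | h0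
  · rw [show i = ⟨0, by omega⟩ from Fin.ext h0, R0 a (-a) A hn4 hE]
    simp only [Fin.val_mk]
    rw [pvEq1 (-a) 1 (by norm_num), pvEq2 (-a) 2 (by norm_num)]
    ring
  · rw [show i = ⟨1, by omega⟩ from Fin.ext h0, R1 a (-a) A hn4 hE]
    simp only [Fin.val_mk]
    rw [pvEq0 (-a) 0 (by norm_num), pvEq3 (-a) 3 (by norm_num)]
    ring
  · rw [Rmid a (-a) A hn4 hE _ i hl hr]
    simp only [Fin.val_mk, pv]
    rw [show (i.val - 2) % 4 = (i.val + 2) % 4 from by omega]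
    ring
  · rw [show i = ⟨n - 2, by omega⟩ from Fin.ext h0, Rn2 a (-a) A hn4 hE]
    simp only [Fin.val_mk]
    rcases hmod with hm | hm
    · rw [pvEq0 (-a) (n - 4) (by omega), pvEq3 (-a) (n - 1) (by omega)]
      linear_combination -haa
    · rw [pvEq2 (-a) (n - 4) (by omega), pvEq1 (-a) (n - 1) (by omega)]
      ring
  · rw [show i = ⟨n - 1, by omega⟩ from Fin.ext h0, Rn1 a (-a) A hn4 hE]
    simp only [Fin.val_mk]
    rcases hmod with hm | hm
    · rw [pvEq1 (-a) (n - 3) (by omega), pvEq2 (-a) (n - 2) (by omega)]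
      ring
    · rw [pvEq3 (-a) (n - 3) (by omega), pvEq0 (-a) (n - 2) (by omega)]
      ring

private lemma evenPspan (a : F) (A : Matrix (Fin n) (Fin n) F)
    (hn4 : 4 ≤ n) (hE : ∀ i j : Fin n, A i j = ent a (-a) n i.val j.val)
    (h2 : (2 : F) ≠ 0) (ha0 : a ≠ 0) (haa : a * a = 1)
    (hmod : n % 4 = 0 ∨ n % 4 = 2)
    (x : Fin n → F) (hx : A.mulVec x = 0) :
    ∃ t : F, t • (fun j : Fin n => pv (-a) j.val) = x := by
  have k4 := keyLem a (-a) A hn4 hE x hx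
  have hs : x ⟨1, by omega⟩ = 0 := by
    rcases hmod with hm | hm
    · have e2 := congrFun hx ⟨n - 1, by omega⟩
      rw [Rn1 a (-a) A hn4 hE x, Pi.zero_apply] at e2
      rw [k4 (n - 3) (by omega), k4 (n - 2) (by omega)] at e2
      rw [pvEq1 (-a) (n - 3) (by omega), qvEq1 (-a) (n - 3) (by omega),
        pvEq2 (-a) (n - 2) (by omega), qvEq2 (-a) (n - 2) (by omega)] at e2
      have h'' : (2 : F) * x ⟨1, by omega⟩ = 0 := by
        linear_combination e2 - x ⟨1, by omega⟩ * haa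
      exact (mul_eq_zero.mp h'').resolve_left h2
    · have e1 := congrFun hx ⟨n - 2, by omega⟩
      rw [Rn2 a (-a) A hn4 hE x, Pi.zero_apply] at e1
      rw [k4 (n - 4) (by omega), k4 (n - 1) (by omega)] at e1
      rw [pvEq2 (-a) (n - 4) (by omega), qvEq2 (-a) (n - 4) (by omega),
        pvEq1 (-a) (n - 1) (by omega), qvEq1 (-a) (n - 1) (by omega)] at e1
      have h'' : ((2 : F) * a) * x ⟨1, by omega⟩ = 0 := by
        linear_combination e1
      exact (mul_eq_zero.mp h'').resolve_left (mul_ne_zero h2 ha0)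
  refine ⟨x ⟨0, by omega⟩, funext fun j => ?_⟩
  have hj := k4 j.val j.isLt
  simp only [Fin.eta] at hj
  rw [Pi.smul_apply, smul_eq_mul, hj, hs]
  ring

end Even
set_option maxHeartbeats 1600000 in
theorem lemma_general {F : Type*} [Field F] {n : ℕ} (hn : 3 ≤ n)
    (a b c : F)
    (ha : a = 1 ∨ a = -1) (hb : b = 1 ∨ b = -1) (hc : c = 1 ∨ c = -1)
    (A : Matrix (Fin n) (Fin n) F)
    (hA : ∀ i j : Fin n, A i j =
      if (i.val, j.val) = (0, 1) then -c
      else if (i.val, j.val) = (1, 0) then c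
      else if (i.val, j.val) = (n - 1, n - 2) then a
      else if (i.val, j.val) = (n - 2, n - 1) then b
      else if j.val + 2 = i.val then 1
      else if i.val + 2 = j.val then -1
      else 0)
    (h : Even A.rank) :
    a = -b := by
  by_cases h2 : (2 : F) = 0
  · have h1 : (1 : F) = -1 := by linear_combination h2
    rcases ha with rfl | rfl <;> rcases hb with rfl | rfl <;>
      first | exact h1 | linear_combination -h2 | norm_num
  by_contra hab
  have hb' : a = b := by
    rcases ha with rfl | rfl <;> rcases hb with rfl | rfl
    · rfl
    · exact absurd (by norm_num) hab
    · exact absurd (by norm_num) hab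
    · rfl
  subst hb'
  have ha0 : a ≠ 0 := by rcases ha with rfl | rfl <;> norm_num
  have hc0 : c ≠ 0 := by rcases hc with rfl | rfl <;> norm_num
  have haa : a * a = 1 := by rcases ha with rfl | rfl <;> norm_num
  have hrn : A.rank + Module.finrank F (LinearMap.ker A.mulVecLin) = n := by
    have := LinearMap.finrank_range_add_finrank_ker A.mulVecLin
    rwa [Module.finrank_pi, Fintype.card_fin] at this
  have hcanc : ∀ u : F, (2 : F) * (a * (c * u)) = 0 → u = 0 := by
    intro u hu
    have h2ac : (2 : F) * a * c ≠ 0 := mul_ne_zero (mul_ne_zero h2 ha0) hc0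
    have : ((2 : F) * a * c) * u = 0 := by linear_combination hu
    exact (mul_eq_zero.mp this).resolve_left h2ac
  obtain hn3 | hn4 : n = 3 ∨ 4 ≤ n := by omega
  · -- n = 3
    subst hn3
    have hker : ∀ x : Fin 3 → F, A.mulVec x = 0 → x = 0 := by
      intro x hx
      have e0 := congrFun hx 0
      have e1 := congrFun hx 1
      have e2 := congrFun hx 2
      simp only [Matrix.mulVec, dotProduct, Fin.sum_univ_three, Pi.zero_apply, hA,
        Fin.val_zero, Fin.val_one, Fin.val_two, Prod.mk.injEq] at e0 e1 e2
      norm_num at e0 e1 e2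
      have h1 : x 1 = 0 := by
        apply hcanc
        linear_combination c * e2 - e1 - a * e0
      have h0 : x 0 = 0 := by linear_combination e2 - a * h1
      have h2' : x 2 = 0 := by linear_combination -e0 - c * h1
      funext j
      fin_cases j <;> simp_all
    have hkb : LinearMap.ker A.mulVecLin = ⊥ :=
      LinearMap.ker_eq_bot'.mpr fun m hm => hker m (by rwa [Matrix.mulVecLin_apply] at hm)
    rw [hkb, finrank_bot] at hrn
    obtain ⟨t, ht⟩ := h
    omega
  -- n ≥ 4
  have hE : ∀ i j : Fin n, A i j = ent a c n i.val j.val := by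
    intro i j
    rw [hA i j]
    unfold ent
    simp only [Prod.mk.injEq]
  obtain hodd | hmod : (n % 4 = 1 ∨ n % 4 = 3) ∨ (n % 4 = 0 ∨ n % 4 = 2) := by omega
  · -- odd n : trivial kernel, rank = n odd
    have hkb : LinearMap.ker A.mulVecLin = ⊥ :=
      LinearMap.ker_eq_bot'.mpr fun m hm =>
        oddCase a c A hn4 hE h2 ha0 hc0 hodd m (by rwa [Matrix.mulVecLin_apply] at hm)
    rw [hkb, finrank_bot] at hrn
    obtain ⟨t, ht⟩ := h
    omega
  · -- even n : kernel is one-dimensional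
    have hac : a = c ∨ a = -c := by
      rcases ha with rfl | rfl <;> rcases hc with rfl | rfl <;> norm_num
    have main : ∃ w : Fin n → F, w ≠ 0 ∧ A.mulVec w = 0 ∧
        ∀ x : Fin n → F, A.mulVec x = 0 → ∃ t : F, t • w = x := by
      rcases hac with hca | hca
      · subst hca
        refine ⟨fun j : Fin n => qv a j.val, ?_, evenQker a A hn4 hE haa hmod,
          evenQspan a A hn4 hE h2 ha0 haa hmod⟩
        intro h0
        have h1 := congrFun h0 ⟨1, by omega⟩
        simp only [Fin.val_mk, Pi.zero_apply] at h1
        rw [qvEq1 a 1 (by norm_num)] at h1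
        exact one_ne_zero h1
      · have hc' : c = -a := by rw [hca]; ring
        subst hc'
        refine ⟨fun j : Fin n => pv (-a) j.val, ?_, evenPker a A hn4 hE haa hmod,
          evenPspan a A hn4 hE h2 ha0 haa hmod⟩
        intro h0
        have h1 := congrFun h0 ⟨0, by omega⟩
        simp only [Fin.val_mk, Pi.zero_apply] at h1
        rw [pvEq0 (-a) 0 (by norm_num)] at h1
        exact one_ne_zero h1
    obtain ⟨w, hw0, hwker, hwspan⟩ := main
    have hker : LinearMap.ker A.mulVecLin = Submodule.span F {w} := by
      apply le_antisymm
      · intro x hx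
        rw [LinearMap.mem_ker, Matrix.mulVecLin_apply] at hx
        exact Submodule.mem_span_singleton.mpr (hwspan x hx)
      · rw [Submodule.span_le, Set.singleton_subset_iff, SetLike.mem_coe, LinearMap.mem_ker,
          Matrix.mulVecLin_apply]
        exact hwker
    rw [hker, finrank_span_singleton hw0] at hrn
    obtain ⟨t, ht⟩ := h
    omega
end

section
/- Let A be an n×n matrix over GF(3). Then every principal submatrix of A has even rank if and only if A is skew-symmetric up to multiplication of rows and columns by -1. -/
/-!
If all principal ranks are even, the `1 × 1` and `2 × 2` principal submatrices force a zero
diagonal and a symmetric zero pattern, so the support of `A` is a simple graph `G` whose edges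
carry the signs `-(A i j * A j i) = ±1`. A principal submatrix on an induced cycle of `G` is a
cycle matrix; solving its kernel recurrence `x (i + 2) = σ i * x i` around the cycle shows that
its rank is odd unless the product of the signs along the cycle is `1`. Every closed walk splits
along a repeated vertex or a chord into shorter closed walks, so all closed walks then have sign
`1`, and the signs are a coboundary `t i * t j`; rescaling the rows by `t` makes `A`
skew-symmetric. Conversely, clearing two rows and columns at a time shows that an alternating
matrix has even rank, and diagonal rescaling preserves the ranks of principal submatrices.
-/

open Matrix Finset

theorem Finset.prod_range_two_mul {M : Type*} [CommMonoid M] (f : ℕ → M) (m : ℕ) :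
    ∏ s ∈ range (2 * m), f s = (∏ t ∈ range m, f (2 * t)) * ∏ t ∈ range m, f (2 * t + 1) := by
  induction m with
  | zero => simp
  | succ m ih =>
    rw [show 2 * (m + 1) = 2 * m + 1 + 1 by ring, prod_range_succ, prod_range_succ, ih,
      prod_range_succ, prod_range_succ]
    ac_rfl

namespace ZMod

variable {k : ℕ}

theorem natCast_eq_zero_of_eq {n : ℕ} (h : k = n) : (n : ZMod k) = 0 := by
  subst h
  exact natCast_self k

theorem val_add_one [NeZero k] (z : ZMod k) : (z + 1).val = (z.val + 1) % k := by
  rw [val_add, val_one_eq_one_mod, Nat.add_mod_mod]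

theorem prod_range_natCast {M : Type*} [CommMonoid M] [NeZero k] (g : ZMod k → M) :
    ∏ s ∈ range k, g s = ∏ i, g i :=
  prod_nbij' (↑) val (fun _ _ => mem_univ _) (fun i _ => mem_range.2 i.val_lt)
    (fun _ hs => val_natCast_of_lt (mem_range.1 hs)) (fun i _ => natCast_zmod_val i)
    (fun _ _ => rfl)

theorem exists_eq_add_two_mul [NeZero k] (b j : ZMod k) :
    ∃ l : ℕ, j = b + 2 * l ∨ j = b + 1 + 2 * l := by
  have h := natCast_zmod_val (j - b)
  obtain ⟨l, hl | hl⟩ := Nat.even_or_odd' (j - b).val <;> rw [hl] at h <;> push_cast at h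
  · exact ⟨l, Or.inl (by linear_combination -h)⟩
  · exact ⟨l, Or.inr (by linear_combination -h)⟩

theorem mul_self_eq_one_of_ne_zero_three {x : ZMod 3} (hx : x ≠ 0) : x * x = 1 := by
  revert x
  decide

theorem eq_one_or_eq_neg_one_of_ne_zero_three {x : ZMod 3} (hx : x ≠ 0) : x = 1 ∨ x = -1 :=
  mul_self_eq_one_iff.1 (mul_self_eq_one_of_ne_zero_three hx)

section Recurrence

variable {R : Type*} {σ x : ZMod k → R}

theorem apply_add_two_mul_of_recurrence [CommMonoid R] (hx : ∀ i, x (i + 2) = σ i * x i)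
    (b : ZMod k) (l : ℕ) : x (b + 2 * l) = (∏ t ∈ range l, σ (b + 2 * t)) * x b := by
  induction l with
  | zero => simp
  | succ l ih =>
    rw [prod_range_succ, Nat.cast_succ, show b + 2 * (l + 1 : ZMod k) = b + 2 * l + 2 by ring,
      hx, ih]
    ac_rfl

theorem eq_zero_of_recurrence [NeZero k] [CommMonoidWithZero R]
    (hx : ∀ i, x (i + 2) = σ i * x i) {b : ZMod k} (h₀ : x b = 0) (h₁ : x (b + 1) = 0) :
    x = 0 := by
  funext j
  obtain ⟨l, rfl | rfl⟩ := exists_eq_add_two_mul b j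
  · rw [apply_add_two_mul_of_recurrence hx, h₀, mul_zero, Pi.zero_apply]
  · rw [apply_add_two_mul_of_recurrence hx, h₁, mul_zero, Pi.zero_apply]

theorem prod_mul_prod_eq_prod_of_even [NeZero k] [CommMonoid R] {m : ℕ} (hm : k = 2 * m)
    (b : ZMod k) :
    (∏ t ∈ range m, σ (b + 2 * t)) * ∏ t ∈ range m, σ (b + 1 + 2 * t) = ∏ i, σ i := by
  rw [← Fintype.prod_equiv (Equiv.addLeft b) (fun i => σ (b + i)) σ fun _ => rfl,
    ← prod_range_natCast, congrArg range hm, prod_range_two_mul]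
  push_cast
  simp only [add_comm (2 * _ : ZMod k) 1, add_assoc]

theorem prod_mul_prod_eq_prod_of_odd [NeZero k] [CommMonoid R] {m : ℕ} (hm : k = 2 * m + 1)
    (b : ZMod k) :
    (∏ t ∈ range (m + 1), σ (b + 2 * t)) * ∏ t ∈ range m, σ (b + 1 + 2 * t) = ∏ i, σ i := by
  rw [← Fintype.prod_equiv (Equiv.addLeft b) (fun i => σ (b + i)) σ fun _ => rfl,
    ← prod_range_natCast, congrArg range hm, prod_range_succ, prod_range_succ,
    prod_range_two_mul]
  push_cast
  simp only [add_comm (2 * _ : ZMod k) 1, add_assoc]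
  ac_rfl

theorem exists_prod_eq_one_of_prod_eq_neg_one [NeZero k] {σ : ZMod k → ZMod 3} {m : ℕ}
    (hm : k = 2 * m) (hσ : ∏ i, σ i = -1) :
    ∃ a : ZMod k, ∏ t ∈ range m, σ (a + 2 * t) = 1 ∧ ∏ t ∈ range m, σ (a + 1 + 2 * t) ≠ 1 := by
  have h₀ := prod_mul_prod_eq_prod_of_even (σ := σ) hm 0
  have h₁ := prod_mul_prod_eq_prod_of_even (σ := σ) hm 1
  simp only [zero_add] at h₀
  rw [hσ] at h₀ h₁
  have hne : ∏ t ∈ range m, σ (2 * t) ≠ 0 := left_ne_zero_of_mul (h₀ ▸ neg_ne_zero.2 one_ne_zero)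
  rcases eq_one_or_eq_neg_one_of_ne_zero_three hne with h | h
  · refine ⟨0, by simpa using h, ?_⟩
    rw [h, one_mul] at h₀
    rw [zero_add, h₀]
    decide
  · rw [h, neg_one_mul, neg_inj] at h₀
    refine ⟨1, h₀, ?_⟩
    rw [h₀, one_mul] at h₁
    rw [h₁]
    decide

theorem eq_zero_of_recurrence_of_odd [NeZero k] {K : Type*} [Field K] {σ x : ZMod k → K}
    {m : ℕ} (hm : k = 2 * m + 1) (hσ : ∏ i, σ i ≠ 1) (hx : ∀ i, x (i + 2) = σ i * x i) :
    x = 0 := by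
  have hk : (2 * m + 1 : ZMod k) = 0 := by exact_mod_cast natCast_eq_zero_of_eq hm
  funext b
  have h₁ := apply_add_two_mul_of_recurrence hx b (m + 1)
  have h₀ := apply_add_two_mul_of_recurrence hx (b + 1) m
  rw [show b + 2 * ((m + 1 : ℕ) : ZMod k) = b + 1 by push_cast; linear_combination hk] at h₁
  rw [show b + 1 + 2 * (m : ZMod k) = b by linear_combination hk] at h₀
  have hb : x b = (∏ i, σ i) * x b := by
    rw [← prod_mul_prod_eq_prod_of_odd hm b, mul_comm (∏ t ∈ range (m + 1), _), mul_assoc, ← h₁]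
    exact h₀
  by_contra hb0
  exact hσ ((mul_eq_right₀ hb0).1 hb.symm)

theorem exists_recurrence_solution_of_even [NeZero k] [CommMonoidWithZero R] {m : ℕ}
    (hm : k = 2 * m) (hk : 3 ≤ k) {a : ZMod k} (ha : ∏ t ∈ range m, σ (a + 2 * t) = 1) :
    ∃ v : ZMod k → R, (∀ i, v (i + 2) = σ i * v i) ∧ v a = 1 ∧ v (a + 1) = 0 := by
  -- `v` is supported on the orbit `a + 2ℕ`, where it is the partial product of `σ`; it closes up
  -- after `m` steps because the orbit product is `1`.
  refine ⟨fun j => if (j - a).val % 2 = 0 then ∏ t ∈ range ((j - a).val / 2), σ (a + 2 * t)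
    else 0, fun i => ?_, by simp, ?_⟩
  · have hi : i = a + ((i - a).val : ZMod k) := by rw [natCast_zmod_val]; ring
    have hval : (i + 2 - a).val = ((i - a).val + 2) % k := by
      rw [show i + 2 - a = i - a + 2 by ring, val_add, val_ofNat_of_lt (show 2 < k by omega)]
    have hnk := (i - a).val_lt
    simp only [hval]
    generalize (i - a).val = n at hi hnk
    obtain ⟨l, rfl | rfl⟩ := Nat.even_or_odd' n
    · by_cases hlt : 2 * l + 2 < k
      · rw [Nat.mod_eq_of_lt hlt, show (2 * l + 2) / 2 = l + 1 by omega, prod_range_succ]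
        simp [hi, mul_comm]
      · rw [show 2 * l + 2 = k by omega, Nat.mod_self]
        simp only [Nat.zero_mod, Nat.zero_div, if_true, prod_range_zero]
        rw [← ha, show m = l + 1 by omega, prod_range_succ]
        simp [hi, mul_comm]
    · have : (2 * l + 1 + 2) % k % 2 = 1 := by
        rw [Nat.mod_mod_of_dvd _ ⟨m, hm⟩]
        omega
      simp [this]
  · simp [val_one_eq_one_mod, Nat.mod_eq_of_lt (show 1 < k by omega)]

end Recurrence

end ZMod

namespace Matrix

variable {K : Type*} [Field K]

section Rank

variable {m : Type*}

theorem sub_smul_vecMulVec_alternating {B : Matrix m m K} (hB : Bᵀ = -B) (hd : ∀ i, B i i = 0)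
    (c : K) (u v : m → K) :
    (B - c • (vecMulVec u v - vecMulVec v u))ᵀ = -(B - c • (vecMulVec u v - vecMulVec v u)) ∧
      ∀ i, (B - c • (vecMulVec u v - vecMulVec v u)) i i = 0 := by
  refine ⟨?_, fun i => ?_⟩
  · simp only [transpose_sub, transpose_smul, transpose_vecMulVec, hB]
    module
  · simp [hd, vecMulVec_apply, mul_comm]

variable [Fintype m]

theorem rank_add_finrank_ker (B : Matrix m m K) :
    B.rank + Module.finrank K (LinearMap.ker B.mulVecLin) = Fintype.card m := by
  rw [rank, LinearMap.finrank_range_add_finrank_ker, Module.finrank_fintype_fun_eq_card]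

variable [DecidableEq m] {B : Matrix m m K}

theorem mulVec_single_one_of_transpose_eq_neg (hB : Bᵀ = -B) (l : m) :
    B *ᵥ Pi.single l 1 = -B l := by
  ext r
  simpa using congr_fun (congr_fun hB l) r

theorem ker_mulVecLin_sub_smul_vecMulVec (hB : Bᵀ = -B) (hd : ∀ i, B i i = 0) {i j : m}
    (hij : B i j ≠ 0) :
    LinearMap.ker (B - (B i j)⁻¹ • (vecMulVec (B i) (B j) - vecMulVec (B j) (B i))).mulVecLin =
      LinearMap.ker B.mulVecLin ⊔ Submodule.span K {Pi.single i 1, Pi.single j 1} := by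
  have hji : B j i = -B i j := by simpa using congr_fun (congr_fun hB i) j
  have hcol := mulVec_single_one_of_transpose_eq_neg hB
  have hB'x : ∀ x, (B - (B i j)⁻¹ • (vecMulVec (B i) (B j) - vecMulVec (B j) (B i))) *ᵥ x =
      B *ᵥ x - (B i j)⁻¹ • ((B *ᵥ x) j • B i - (B *ᵥ x) i • B j) := fun x => by
    simp only [sub_mulVec, smul_mulVec, vecMulVec_mulVec, op_smul_eq_smul]
    rfl
  apply le_antisymm
  · intro x hx
    rw [LinearMap.mem_ker, mulVecLin_apply, hB'x, sub_eq_zero] at hx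
    set y : m → K := (B i j)⁻¹ • ((B *ᵥ x) i • Pi.single j 1 - (B *ᵥ x) j • Pi.single i 1)
    have hy : y ∈ Submodule.span K {Pi.single i 1, Pi.single j 1} :=
      Submodule.smul_mem _ _ (Submodule.sub_mem _
        (Submodule.smul_mem _ _ (Submodule.subset_span (by simp)))
        (Submodule.smul_mem _ _ (Submodule.subset_span (by simp))))
    have hxy : x - y ∈ LinearMap.ker B.mulVecLin := by
      rw [LinearMap.mem_ker, mulVecLin_apply, mulVec_sub, hx, mulVec_smul, mulVec_sub,
        mulVec_smul, mulVec_smul, hcol, hcol]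
      module
    simpa using Submodule.add_mem_sup hxy hy
  · refine sup_le (fun x hx => ?_) ((Submodule.span_le).2 ?_)
    · rw [LinearMap.mem_ker, mulVecLin_apply] at hx ⊢
      simp [hB'x, hx]
    · rintro _ (rfl | rfl) <;> rw [SetLike.mem_coe, LinearMap.mem_ker, mulVecLin_apply, hB'x] <;>
        simp [hcol, hd, hji, smul_smul, inv_mul_cancel₀ hij]

theorem ker_mulVecLin_inf_span_single_eq_bot (hB : Bᵀ = -B) (hd : ∀ i, B i i = 0) {i j : m}
    (hij : B i j ≠ 0) :
    LinearMap.ker B.mulVecLin ⊓ Submodule.span K {Pi.single i 1, Pi.single j 1} = ⊥ := by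
  have hji : B j i = -B i j := by simpa using congr_fun (congr_fun hB i) j
  rw [eq_bot_iff]
  rintro y ⟨hyK, hyE⟩
  obtain ⟨a, b, rfl⟩ := Submodule.mem_span_pair.1 hyE
  rw [SetLike.mem_coe, LinearMap.mem_ker, mulVecLin_apply, mulVec_add, mulVec_smul, mulVec_smul,
    mulVec_single_one_of_transpose_eq_neg hB, mulVec_single_one_of_transpose_eq_neg hB] at hyK
  have hi := congr_fun hyK i
  have hj := congr_fun hyK j
  simp [hd, hji, hij] at hi hj
  subst hi hj
  simp

/-- Subtracting this alternating rank-two matrix clears the rows and columns `i` and `j`. -/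
theorem rank_eq_rank_sub_add_two (hB : Bᵀ = -B) (hd : ∀ i, B i i = 0) {i j : m}
    (hij : B i j ≠ 0) :
    B.rank = (B - (B i j)⁻¹ • (vecMulVec (B i) (B j) - vecMulVec (B j) (B i))).rank + 2 := by
  have hne : i ≠ j := by rintro rfl; exact hij (hd i)
  have hE : Module.finrank K (Submodule.span K {(Pi.single i 1 : m → K), Pi.single j 1}) = 2 := by
    have hli : LinearIndependent K ![(Pi.single i 1 : m → K), Pi.single j 1] :=
      LinearIndependent.pair_iff.2 fun s t h =>
        ⟨by simpa [hne] using congr_fun h i, by simpa [hne.symm] using congr_fun h j⟩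
    have h := finrank_span_eq_card hli
    rwa [Matrix.range_cons_cons_empty, Fintype.card_fin] at h
  have h₁ := rank_add_finrank_ker B
  have h₂ := rank_add_finrank_ker (B - (B i j)⁻¹ • (vecMulVec (B i) (B j) - vecMulVec (B j) (B i)))
  have h₃ := Submodule.finrank_sup_add_finrank_inf_eq (LinearMap.ker B.mulVecLin)
    (Submodule.span K {Pi.single i 1, Pi.single j 1})
  rw [← ker_mulVecLin_sub_smul_vecMulVec hB hd hij, ker_mulVecLin_inf_span_single_eq_bot hB hd hij,
    finrank_bot, hE] at h₃
  omega

omit [DecidableEq m] in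
theorem even_rank_of_transpose_eq_neg (B : Matrix m m K) (hB : Bᵀ = -B) (hd : ∀ i, B i i = 0) :
    Even B.rank := by
  classical
  induction hr : B.rank using Nat.strong_induction_on generalizing B with
  | _ r ih =>
  by_cases h0 : B = 0
  · simp [← hr, h0]
  obtain ⟨i, j, hij⟩ : ∃ i j, B i j ≠ 0 := by
    by_contra! h
    exact h0 (ext h)
  have hrank := rank_eq_rank_sub_add_two hB hd hij
  obtain ⟨hB', hd'⟩ := sub_smul_vecMulVec_alternating hB hd (B i j)⁻¹ (B i) (B j)
  obtain ⟨s, hs⟩ := ih _ (by omega) _ hB' hd' rfl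
  exact ⟨s + 1, by omega⟩

theorem rank_diagonal_mul_mul_diagonal (A : Matrix m m K) {d₁ d₂ : m → K}
    (h₁ : ∀ i, d₁ i ≠ 0) (h₂ : ∀ i, d₂ i ≠ 0) : (diagonal d₁ * A * diagonal d₂).rank = A.rank := by
  have hunit : ∀ d : m → K, (∀ i, d i ≠ 0) → IsUnit (diagonal d).det := fun d hd => by
    rw [det_diagonal]
    exact isUnit_iff_ne_zero.2 (prod_ne_zero_iff.2 fun i _ => hd i)
  rw [rank_mul_eq_left_of_isUnit_det _ _ (hunit d₂ h₂),
    rank_mul_eq_right_of_isUnit_det _ _ (hunit d₁ h₁)]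

theorem rank_eq_one_of_unique [Unique m] (N : Matrix m m K) (h : N default default ≠ 0) :
    N.rank = 1 := by
  rw [rank_of_isUnit N (by rw [isUnit_iff_isUnit_det, det_unique]; exact isUnit_iff_ne_zero.2 h),
    Fintype.card_unique]

end Rank

section Cycle

open ZMod

variable {k : ℕ} [NeZero k] {M : Matrix (ZMod k) (ZMod k) K}

theorem mulVec_eq_zero_iff_of_cycle (hk : 3 ≤ k)
    (hM : ∀ i j, M i j ≠ 0 ↔ j = i + 1 ∨ i = j + 1) (x : ZMod k → K) :
    M *ᵥ x = 0 ↔ ∀ i, x (i + 2) = -(M (i + 1) i / M (i + 1) (i + 2)) * x i := by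
  have h2 : (2 : ZMod k) ≠ 0 := by
    intro h
    have := Nat.le_of_dvd two_pos ((natCast_eq_zero_iff 2 k).1 (by exact_mod_cast h))
    omega
  have hrow : ∀ i, (M *ᵥ x) (i + 1) = M (i + 1) i * x i + M (i + 1) (i + 2) * x (i + 2) := by
    intro i
    refine Fintype.sum_eq_add i (i + 2) (by simpa using h2) fun j hj => ?_
    show M (i + 1) j * x j = 0
    rw [not_ne_iff.1 (mt (hM _ _).1 ?_), zero_mul]
    rintro (h | h)
    · exact hj.2 (by rw [h]; ring)
    · exact hj.1 (add_right_cancel h).symm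
  have hne : ∀ i, M (i + 1) (i + 2) ≠ 0 := fun i => (hM _ _).2 (Or.inl (by ring))
  constructor
  · intro h i
    have := hrow i
    rw [h, Pi.zero_apply] at this
    calc x (i + 2) = M (i + 1) (i + 2) * x (i + 2) / M (i + 1) (i + 2) := by field_simp [hne i]
      _ = _ := by rw [eq_neg_of_add_eq_zero_right this.symm]; ring
  · intro h
    funext j
    obtain ⟨i, rfl⟩ : ∃ i, j = i + 1 := ⟨j - 1, by ring⟩
    rw [hrow, h, Pi.zero_apply]
    field_simp [hne i]
    ring

theorem rank_eq_of_recurrence_of_odd {σ : ZMod k → K}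
    (hker : ∀ x, M *ᵥ x = 0 ↔ ∀ i, x (i + 2) = σ i * x i) {m : ℕ} (hm : k = 2 * m + 1)
    (hσ : ∏ i, σ i ≠ 1) : M.rank = k := by
  have h := M.rank_add_finrank_ker
  have hbot : LinearMap.ker M.mulVecLin = ⊥ :=
    eq_bot_iff.2 fun x hx => eq_zero_of_recurrence_of_odd hm hσ ((hker x).1 (by simpa using hx))
  rwa [hbot, finrank_bot, add_zero, ZMod.card] at h

theorem rank_add_one_eq_of_recurrence_of_even {σ : ZMod k → K}
    (hker : ∀ x, M *ᵥ x = 0 ↔ ∀ i, x (i + 2) = σ i * x i) {m : ℕ} (hm : k = 2 * m)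
    (hk : 3 ≤ k) {a : ZMod k} (ha : ∏ t ∈ range m, σ (a + 2 * t) = 1)
    (ha' : ∏ t ∈ range m, σ (a + 1 + 2 * t) ≠ 1) : M.rank + 1 = k := by
  obtain ⟨v, hv, hva, hva'⟩ := exists_recurrence_solution_of_even hm hk ha
  have hker_eq : LinearMap.ker M.mulVecLin = K ∙ v := by
    refine le_antisymm (fun x hx => ?_) ?_
    · have hx := (hker x).1 (by simpa using hx)
      have hxa' : x (a + 1) = 0 := by
        have h := apply_add_two_mul_of_recurrence hx (a + 1) m
        rw [show (2 * m : ZMod k) = 0 by exact_mod_cast natCast_eq_zero_of_eq hm, add_zero] at h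
        by_contra h0
        exact ha' ((mul_eq_right₀ h0).1 h.symm)
      have hxv : x - x a • v = 0 :=
        eq_zero_of_recurrence (b := a) (fun i => by simp [hx, hv]; ring) (by simp [hva])
          (by simp [hxa', hva'])
      exact Submodule.mem_span_singleton.2 ⟨x a, (sub_eq_zero.1 hxv).symm⟩
    · rw [Submodule.span_singleton_le_iff_mem, LinearMap.mem_ker, mulVecLin_apply]
      exact (hker v).2 hv
  have h := M.rank_add_finrank_ker
  rwa [ZMod.card, hker_eq, finrank_span_singleton fun h => by simp [h] at hva] at h

end Cycle

open ZMod in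
theorem prod_cycle_eq_one_of_even_rank {k : ℕ} [NeZero k] (hk : 3 ≤ k)
    {M : Matrix (ZMod k) (ZMod k) (ZMod 3)} (hM : ∀ i j, M i j ≠ 0 ↔ j = i + 1 ∨ i = j + 1)
    (heven : Even M.rank) : ∏ i, -(M i (i + 1) * M (i + 1) i) = 1 := by
  set σ : ZMod k → ZMod 3 := fun i => -(M (i + 1) i / M (i + 1) (i + 2))
  have hker := mulVec_eq_zero_iff_of_cycle hk hM
  have hσ : ∏ i, σ i = ∏ i, -(M i (i + 1) * M (i + 1) i) := by
    have hσi : ∀ i, σ i = -M (i + 1) (i + 1 + 1) * M (i + 1) i := fun i => by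
      have hsq := mul_self_eq_one_of_ne_zero_three ((hM (i + 1) (i + 2)).2 (Or.inl (by ring)))
      simp only [σ, div_eq_mul_inv, inv_eq_of_mul_eq_one_right hsq, one_add_one_eq_two, add_assoc]
      ring
    simp_rw [hσi, prod_mul_distrib, neg_mul_eq_neg_mul]
    rw [Fintype.prod_equiv (Equiv.addRight 1) (fun i => -M (i + 1) (i + 1 + 1))
      (fun i => -M i (i + 1)) fun _ => rfl, ← prod_mul_distrib]
  have hne : ∏ i, -(M i (i + 1) * M (i + 1) i) ≠ 0 := prod_ne_zero_iff.2 fun i _ =>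
    neg_ne_zero.2 (mul_ne_zero ((hM _ _).2 (Or.inl rfl)) ((hM _ _).2 (Or.inr rfl)))
  refine (eq_one_or_eq_neg_one_of_ne_zero_three hne).resolve_right fun hneg => ?_
  rw [← hσ] at hneg
  obtain ⟨m, hm | hm⟩ := Nat.even_or_odd' k
  · obtain ⟨a, ha, ha'⟩ := exists_prod_eq_one_of_prod_eq_neg_one hm hneg
    have := rank_add_one_eq_of_recurrence_of_even hker hm hk ha ha'
    obtain ⟨r, hr⟩ := heven
    omega
  · have := rank_eq_of_recurrence_of_odd hker hm (by rw [hneg]; decide)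
    rw [this] at heven
    exact Nat.not_even_iff_odd.2 ⟨m, hm⟩ heven

end Matrix

namespace SimpleGraph

variable {V : Type*} (G : SimpleGraph V)

def IsInducedCycle {k : ℕ} (ψ : ZMod k → V) : Prop :=
  Function.Injective ψ ∧ ∀ z z', G.Adj (ψ z) (ψ z') ↔ z' = z + 1 ∨ z = z' + 1

namespace Walk

variable {G} {M : Type*} [CommMonoid M] (w : V → V → M) {u v x : V}

def gain (p : G.Walk u v) : M := (p.darts.map fun d => w d.fst d.snd).prod

@[simp] theorem gain_nil : (nil : G.Walk u u).gain w = 1 := rfl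

@[simp] theorem gain_cons (h : G.Adj u v) (p : G.Walk v x) :
    (cons h p).gain w = w u v * p.gain w := by
  simp [gain]

@[simp] theorem gain_append (p : G.Walk u v) (q : G.Walk v x) :
    (p.append q).gain w = p.gain w * q.gain w := by
  simp [gain, darts_append]

@[simp] theorem gain_copy {u' v' : V} (p : G.Walk u v) (hu : u = u') (hv : v = v') :
    (p.copy hu hv).gain w = p.gain w := by
  simp [gain]

theorem gain_mul_gain_reverse (hw : ∀ x y, G.Adj x y → w x y * w y x = 1) (p : G.Walk u v) :
    p.gain w * p.reverse.gain w = 1 := by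
  induction p with
  | nil => simp
  | cons h p ih =>
    rw [reverse_cons, gain_append, gain_cons, gain_cons, gain_nil, mul_one]
    calc _ = w _ _ * w _ _ * (p.gain w * p.reverse.gain w) := by ac_rfl
      _ = 1 := by rw [hw _ _ h, ih, one_mul]

theorem gain_eq_prod_range (p : G.Walk u v) :
    p.gain w = ∏ a ∈ range p.length, w (p.getVert a) (p.getVert (a + 1)) := by
  induction p with
  | nil => simp
  | cons h p ih => simp [prod_range_succ', ih, mul_comm]

theorem exists_split_gain (c : G.Walk u x) {a b : ℕ} (hab : a ≤ b) (hb : b ≤ c.length)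
    (q : G.Walk (c.getVert a) (c.getVert b)) :
    ∃ (c₁ : G.Walk u x) (c₂ : G.Walk (c.getVert a) (c.getVert a)),
      c₁.length = a + q.length + (c.length - b) ∧ c₂.length = b - a + q.length ∧
      c₁.gain w * c₂.gain w = c.gain w * (q.gain w * q.reverse.gain w) := by
  have h : (c.drop a).getVert (b - a) = c.getVert b := by
    rw [drop_getVert, Nat.add_sub_cancel' hab]
  refine ⟨(c.take a).append (q.append (c.drop b)),
    (((c.drop a).take (b - a)).copy rfl h).append q.reverse, ?_, ?_, ?_⟩
  · simp; omega
  · simp; omega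
  · simp only [gain_append, gain_copy]
    simp only [gain, darts_take, darts_drop, List.map_take, List.map_drop]
    set L := c.darts.map fun d => w d.fst d.snd
    conv_rhs => rw [← List.take_append_drop a L, ← List.take_append_drop (b - a) (L.drop a),
      List.drop_drop, Nat.add_sub_cancel' hab]
    simp only [List.prod_append]
    ac_rfl

theorem getVert_val_add_one (c : G.Walk u u) [NeZero c.length] (z : ZMod c.length) :
    c.getVert (z + 1).val = c.getVert (z.val + 1) := by
  rw [ZMod.val_add_one]
  rcases (show z.val + 1 ≤ c.length from z.val_lt).lt_or_eq with h | h
  · rw [Nat.mod_eq_of_lt h]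
  · rw [h, Nat.mod_self, getVert_zero, getVert_length]

theorem gain_eq_prod_zmod (c : G.Walk u u) [NeZero c.length] :
    c.gain w = ∏ z : ZMod c.length, w (c.getVert z.val) (c.getVert (z + 1).val) := by
  simp_rw [getVert_val_add_one, gain_eq_prod_range, ← ZMod.prod_range_natCast]
  exact prod_congr rfl fun s hs => by rw [ZMod.val_natCast_of_lt (mem_range.1 hs)]

/-- No walk between two vertices of `c` cuts it, as in `exists_split_gain`, into two strictly
shorter closed walks. -/
def IsUnsplittable (c : G.Walk u u) : Prop :=
  ∀ a b, a ≤ b → b ≤ c.length → ∀ q : G.Walk (c.getVert a) (c.getVert b),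
    q.length < b - a → c.length ≤ b - a + q.length

namespace IsUnsplittable

variable {c : G.Walk u u} (hc : c.IsUnsplittable)
include hc

theorem getVert_ne {a b : ℕ} (hab : a < b) (hb : b < c.length) : c.getVert a ≠ c.getVert b :=
  fun he => by
    have hlen := hc _ _ hab.le hb.le (nil.copy rfl he) (by simpa using hab)
    simp only [length_copy, length_nil, add_zero] at hlen
    omega

theorem eq_add_one_of_adj {a b : ℕ} (hab : a < b) (hb : b < c.length)
    (h : G.Adj (c.getVert a) (c.getVert b)) : b = a + 1 ∨ a = 0 ∧ b + 1 = c.length := by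
  have hlen := hc _ _ hab.le hb.le h.toWalk
  rw [h.length_toWalk] at hlen
  omega

theorem isInducedCycle [NeZero c.length] :
    G.IsInducedCycle fun z : ZMod c.length => c.getVert z.val := by
  have hlt : ∀ z : ZMod c.length, z.val < c.length := fun z => z.val_lt
  have hadj : ∀ z z' : ZMod c.length, z.val < z'.val →
      G.Adj (c.getVert z.val) (c.getVert z'.val) → z' = z + 1 ∨ z = z' + 1 := fun z z' h ha => by
    rcases hc.eq_add_one_of_adj h (hlt z') ha with h1 | ⟨h0, h1⟩
    · left
      apply ZMod.val_injective
      rw [ZMod.val_add_one, ← h1, Nat.mod_eq_of_lt (hlt z')]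
    · right
      apply ZMod.val_injective
      rw [ZMod.val_add_one, h1, Nat.mod_self, h0]
  refine ⟨fun z z' he => ?_, fun z z' => ⟨fun ha => ?_, ?_⟩⟩
  · by_contra hne
    rcases lt_or_gt_of_ne ((ZMod.val_injective _).ne hne) with h | h
    · exact hc.getVert_ne h (hlt z') he
    · exact hc.getVert_ne h (hlt z) he.symm
  · rcases lt_trichotomy z.val z'.val with h | h | h
    · exact hadj z z' h ha
    · exact absurd (congrArg c.getVert h) ha.ne
    · exact (hadj z' z h ha.symm).symm
  · dsimp only
    rintro (rfl | rfl)
    · rw [getVert_val_add_one]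
      exact c.adj_getVert_succ (hlt z)
    · rw [getVert_val_add_one]
      exact (c.adj_getVert_succ (hlt z')).symm

end IsUnsplittable

theorem gain_eq_one_of_length_le_two (hw : ∀ x y, G.Adj x y → w x y * w y x = 1)
    (c : G.Walk u u) (hc : c.length ≤ 2) : c.gain w = 1 := by
  rcases c with _ | ⟨h, _ | ⟨_, _ | _⟩⟩
  · rfl
  · exact (G.irrefl h).elim
  · simpa using hw _ _ h
  · simp at hc

theorem gain_eq_one_of_forall_isInducedCycle (hw : ∀ x y, G.Adj x y → w x y * w y x = 1)
    (hcyc : ∀ (k : ℕ) [NeZero k], 3 ≤ k → ∀ ψ : ZMod k → V, G.IsInducedCycle ψ →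
      ∏ z, w (ψ z) (ψ (z + 1)) = 1)
    (c : G.Walk u u) : c.gain w = 1 := by
  induction hL : c.length using Nat.strong_induction_on generalizing u with
  | _ L ih =>
  by_cases hc : c.IsUnsplittable
  · rcases le_or_gt c.length 2 with h2 | h3
    · exact gain_eq_one_of_length_le_two w hw c h2
    have : NeZero c.length := ⟨by omega⟩
    rw [gain_eq_prod_zmod]
    exact hcyc _ h3 _ hc.isInducedCycle
  simp only [IsUnsplittable, not_forall, not_le] at hc
  obtain ⟨a, b, hab, hb, q, hq₁, hq₂⟩ := hc
  obtain ⟨c₁, c₂, h₁, h₂, hgain⟩ := c.exists_split_gain w hab hb q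
  rwa [gain_mul_gain_reverse w hw, mul_one, ih _ (by omega) c₁ rfl, ih _ (by omega) c₂ rfl,
    one_mul, eq_comm] at hgain

theorem exists_potential (hw : ∀ x y, G.Adj x y → w x y * w y x = 1)
    (hbal : ∀ u (c : G.Walk u u), c.gain w = 1) :
    ∃ t : V → M, (∀ x, IsUnit (t x)) ∧ ∀ x y, G.Adj x y → t y = t x * w x y := by
  have hpath : ∀ {r x : V} (p q : G.Walk r x), p.gain w = q.gain w := fun p q =>
    calc p.gain w = p.gain w * (q.gain w * q.reverse.gain w) := by
          rw [gain_mul_gain_reverse w hw, mul_one]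
      _ = q.gain w * (p.append q.reverse).gain w := by rw [gain_append]; ac_rfl
      _ = q.gain w := by rw [hbal, mul_one]
  let root : V → V := fun x => (G.connectedComponentMk x).out
  have hroot : ∀ x, G.Reachable (root x) x := fun x => ConnectedComponent.exact (Quot.out_eq _)
  refine ⟨fun x => (hroot x).some.gain w,
    fun x => IsUnit.of_mul_eq_one _ (gain_mul_gain_reverse w hw _), fun x y hxy => ?_⟩
  have e : root x = root y := by simp only [root, ConnectedComponent.eq.2 hxy.reachable]
  calc (hroot y).some.gain w = (((hroot x).some.append (cons hxy nil)).copy e rfl).gain w :=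
        hpath _ _
    _ = _ := by simp

end Walk
end SimpleGraph

namespace Matrix

variable {K V : Type*} [Field K]

def EvenPrincipalRanks (A : Matrix V V K) : Prop :=
  ∀ I : Finset V, Even (A.submatrix (fun i : I => (i : V)) fun j : I => (j : V)).rank

namespace EvenPrincipalRanks

variable {A : Matrix V V K} (hA : A.EvenPrincipalRanks)
include hA

theorem even_rank_submatrix {ι : Type*} [Fintype ι] {f : ι → V} (hf : Function.Injective f) :
    Even (A.submatrix f f).rank := by
  classical
  let e : ι ≃ univ.image f := Equiv.ofBijective (fun a => ⟨f a, mem_image_of_mem f (mem_univ a)⟩)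
    ⟨fun a b h => hf (congrArg Subtype.val h), fun ⟨x, hx⟩ => by
      obtain ⟨a, -, rfl⟩ := mem_image.1 hx
      exact ⟨a, rfl⟩⟩
  have h := rank_submatrix (A.submatrix (fun i : univ.image f => (i : V)) (↑)) e e
  rw [submatrix_submatrix] at h
  exact h ▸ hA (univ.image f)

theorem apply_self_eq_zero (i : V) : A i i = 0 := by
  by_contra h
  have := hA.even_rank_submatrix (f := fun _ : Unit => i) fun _ _ _ => rfl
  rw [rank_eq_one_of_unique _ h] at this
  exact Nat.not_even_one this

theorem apply_eq_zero_of_apply_swap_eq_zero {i j : V} (h : A j i = 0) : A i j = 0 := by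
  by_contra hij
  have hne : i ≠ j := by rintro rfl; exact hij h
  have heven := hA.even_rank_submatrix (injective_pair_iff_ne.2 hne)
  have hN : A.submatrix ![i, j] ![i, j] = vecMulVec (Pi.single 0 (A i j)) (Pi.single 1 1) := by
    ext p q
    fin_cases p <;> fin_cases q <;> simp [vecMulVec_apply, hA.apply_self_eq_zero, h]
  have h₁ : (A.submatrix ![i, j] ![i, j]).rank ≤ 1 := hN ▸ rank_vecMulVec_le _ _
  have h₂ : 1 ≤ (A.submatrix ![i, j] ![i, j]).rank :=
    calc 1 = ((A.submatrix ![i, j] ![i, j]).submatrix (fun _ : Unit => 0) fun _ => 1).rank :=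
          (rank_eq_one_of_unique _ hij).symm
      _ ≤ _ := rank_submatrix_le _ _ _
  obtain ⟨r, hr⟩ := heven
  omega

end EvenPrincipalRanks

theorem evenPrincipalRanks_of_transpose_eq_neg {B : Matrix V V K} (hB : Bᵀ = -B)
    (hd : ∀ i, B i i = 0) : B.EvenPrincipalRanks := fun _ =>
  even_rank_of_transpose_eq_neg _ (by rw [transpose_submatrix, hB]; rfl) fun _ => hd _

theorem evenPrincipalRanks_diagonal_mul_mul_diagonal_iff [Fintype V] [DecidableEq V]
    {A : Matrix V V K} {d₁ d₂ : V → K} (h₁ : ∀ i, d₁ i ≠ 0) (h₂ : ∀ i, d₂ i ≠ 0) :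
    (diagonal d₁ * A * diagonal d₂).EvenPrincipalRanks ↔ A.EvenPrincipalRanks := by
  refine forall_congr' fun I => ?_
  have h : (diagonal d₁ * A * diagonal d₂).submatrix (fun i : I => (i : V)) (↑) =
      diagonal (fun i : I => d₁ i) * A.submatrix (↑) (↑) * diagonal fun i : I => d₂ i := by
    ext a b
    simp [mul_diagonal, diagonal_mul]
  rw [h, rank_diagonal_mul_mul_diagonal (d₁ := fun i : I => d₁ i) (d₂ := fun i : I => d₂ i) _
    (fun i => h₁ i) fun i => h₂ i]

end Matrix

namespace Matrix.EvenPrincipalRanks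

open SimpleGraph ZMod

variable {V : Type*} {A : Matrix V V (ZMod 3)} (hA : A.EvenPrincipalRanks)
include hA

theorem fromRel_adj_iff {i j : V} :
    (fromRel fun i j => A i j ≠ 0).Adj i j ↔ i ≠ j ∧ A i j ≠ 0 := by
  rw [fromRel_adj]
  exact and_congr_right fun _ => or_iff_left_of_imp (mt hA.apply_eq_zero_of_apply_swap_eq_zero)

theorem prod_eq_one_of_isInducedCycle {k : ℕ} [NeZero k] (hk : 3 ≤ k) {ψ : ZMod k → V}
    (hψ : (fromRel fun i j => A i j ≠ 0).IsInducedCycle ψ) :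
    ∏ z, -(A (ψ z) (ψ (z + 1)) * A (ψ (z + 1)) (ψ z)) = 1 := by
  refine prod_cycle_eq_one_of_even_rank hk (fun z z' => ?_) (hA.even_rank_submatrix hψ.1)
  rw [← hψ.2, hA.fromRel_adj_iff]
  refine ⟨fun h => ⟨fun he => h ?_, h⟩, And.right⟩
  rw [submatrix_apply, he]
  exact hA.apply_self_eq_zero _

theorem exists_sign_apply_swap :
    ∃ t : V → ZMod 3, (∀ i, t i = 1 ∨ t i = -1) ∧ ∀ i j, A j i = -(t i * t j) * A i j := by
  let G := fromRel fun i j => A i j ≠ 0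
  let w : V → V → ZMod 3 := fun i j => -(A i j * A j i)
  have hw : ∀ i j, G.Adj i j → w i j * w j i = 1 := fun i j hij => by
    have hji := hA.fromRel_adj_iff.1 hij.symm
    have hij := hA.fromRel_adj_iff.1 hij
    linear_combination mul_self_eq_one_of_ne_zero_three (mul_ne_zero hij.2 hji.2)
  obtain ⟨t, ht, hrel⟩ := Walk.exists_potential w hw fun _ c =>
    Walk.gain_eq_one_of_forall_isInducedCycle w hw (fun _ _ hk _ hψ =>
      hA.prod_eq_one_of_isInducedCycle hk hψ) c
  refine ⟨t, fun i => eq_one_or_eq_neg_one_of_ne_zero_three (ht i).ne_zero, fun i j => ?_⟩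
  by_cases hij : G.Adj i j
  · have hti := mul_self_eq_one_of_ne_zero_three (ht i).ne_zero
    have hAij := mul_self_eq_one_of_ne_zero_three (hA.fromRel_adj_iff.1 hij).2
    linear_combination (t i * A i j) * hrel i j hij - A j i * t i * t i * hAij - A j i * hti
  · rw [hA.fromRel_adj_iff, not_and_or, not_not, not_not] at hij
    rcases hij with rfl | h
    · simp [hA.apply_self_eq_zero]
    · simp [h, hA.apply_eq_zero_of_apply_swap_eq_zero h]

theorem exists_transpose_eq_neg [Fintype V] [DecidableEq V] :
    ∃ d : V → ZMod 3, (∀ i, d i = 1 ∨ d i = -1) ∧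
      (diagonal d * A)ᵀ = -(diagonal d * A) ∧ ∀ i, (diagonal d * A) i i = 0 := by
  obtain ⟨t, ht, hsign⟩ := hA.exists_sign_apply_swap
  have htt : ∀ i, t i * t i = 1 := fun i => by rcases ht i with h | h <;> rw [h] <;> norm_num
  refine ⟨t, ht, ?_, fun i => by simp [diagonal_mul, hA.apply_self_eq_zero]⟩
  ext i j
  simp only [transpose_apply, neg_apply, diagonal_mul]
  rw [hsign]
  linear_combination (-(t i * A i j)) * htt j

end Matrix.EvenPrincipalRanks

theorem even_principal_ranks_iff_skew_up_to_signs_GF3 {n : ℕ}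
    (A : Matrix (Fin n) (Fin n) (ZMod 3)) :
    (∀ I : Finset (Fin n),
      Even ((A.submatrix (fun i : I => (i : Fin n)) (fun j : I => (j : Fin n))).rank)) ↔
    ∃ (d1 d2 : Fin n → ZMod 3),
      (∀ i, d1 i = 1 ∨ d1 i = -1) ∧ (∀ i, d2 i = 1 ∨ d2 i = -1) ∧
      (Matrix.diagonal d1 * A * Matrix.diagonal d2)ᵀ =
        -(Matrix.diagonal d1 * A * Matrix.diagonal d2) ∧
      (∀ i, (Matrix.diagonal d1 * A * Matrix.diagonal d2) i i = 0) := by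
  have hne : ∀ d : Fin n → ZMod 3, (∀ i, d i = 1 ∨ d i = -1) → ∀ i, d i ≠ 0 := fun d hd i => by
    rcases hd i with h | h <;> rw [h] <;> decide
  constructor
  · intro hA
    obtain ⟨d, hd, hskew, hdiag⟩ := EvenPrincipalRanks.exists_transpose_eq_neg hA
    refine ⟨d, fun _ => 1, hd, fun _ => Or.inl rfl, ?_⟩
    rw [diagonal_one, mul_one]
    exact ⟨hskew, hdiag⟩
  · rintro ⟨d₁, d₂, hd₁, hd₂, hskew, hdiag⟩
    exact (evenPrincipalRanks_diagonal_mul_mul_diagonal_iff (hne d₁ hd₁) (hne d₂ hd₂)).1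
      (evenPrincipalRanks_of_transpose_eq_neg hskew hdiag)
end
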